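/- arXiv:2201.11195 — 11 statements merged into one kernel-verified Lean document; each statement's English description precedes it below -/
import Mathlib

section
/- Let C be a finite candidate set and let P be a preference profile over C. If P is T-consistent for some ordered binary tree T over C, then P is group-separable. -/
/-- An ordered binary tree: every internal node has a left and a right subtree,
and leaves are labeled with candidates. -/
inductive OBTree (C : Type*) : Type _ where
  | leaf : C → OBTree C
  | node : OBTree C → OBTree C → OBTree C

namespace OBTree

/-- The list of leaf labels of an ordered binary tree (in left-to-right order). -/
def leavesList {C : Type*} : OBTree C → List C
  | .leaf c => [c]
  | .node l r => leavesList l ++ leavesList r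

/-- A vote `v` (a strict linear order on candidates, `v a b` meaning `a` is ranked
above `b`) is consistent with the ordered binary tree `T`: for every internal node,
`v` ranks all candidates labeling leaves of the left subtree above all candidates
labeling leaves of the right subtree, or vice versa. -/
def VoteConsistent {C : Type*} (v : C → C → Prop) : OBTree C → Prop
  | .leaf _ => True
  | .node l r =>
      VoteConsistent v l ∧ VoteConsistent v r ∧
      ((∀ a ∈ l.leavesList, ∀ b ∈ r.leavesList, v a b) ∨
       (∀ a ∈ l.leavesList, ∀ b ∈ r.leavesList, v b a))

end OBTree

/-- A profile (list of votes, each vote a strict linear order given as the relation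
"ranked above") is group-separable: every set `A` of candidates with `|A| ≥ 2` has a
nonempty proper subset `B ⊊ A` such that every vote ranks all of `B` above all of
`A \ B`, or all of `A \ B` above all of `B`. -/
def GroupSeparable {C : Type*} [DecidableEq C] (P : List (C → C → Prop)) : Prop :=
  ∀ A : Finset C, 2 ≤ A.card →
    ∃ B : Finset C, B.Nonempty ∧ B ⊂ A ∧
      ∀ v ∈ P, (∀ b ∈ B, ∀ a ∈ A \ B, v b a) ∨ (∀ b ∈ B, ∀ a ∈ A \ B, v a b)

/-!
Descend the tree from the root to the deepest node whose leaves still contain `A`. Its two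
subtrees then both meet `A`, so `B`, the part of `A` below the left child, is a nonempty proper
subset of `A` with `A \ B` below the right child; every `T`-consistent vote ranks one child's
leaves entirely above the other's, hence separates `B` from `A \ B`.
-/

section

variable {C : Type*}

def Separates [DecidableEq C] (v : C → C → Prop) (A B : Finset C) : Prop :=
  (∀ b ∈ B, ∀ a ∈ A \ B, v b a) ∨ (∀ b ∈ B, ∀ a ∈ A \ B, v a b)

namespace OBTree

theorem card_le_one_of_forall_mem_leavesList_leaf {c : C} {A : Finset C}
    (hA : ∀ a ∈ A, a ∈ (leaf c).leavesList) : A.card ≤ 1 :=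
  Finset.card_le_one.2 fun a ha b hb => by
    simp only [leavesList, List.mem_singleton] at hA
    rw [hA a ha, hA b hb]

theorem separates_filter_mem_leavesList_left [DecidableEq C] {v : C → C → Prop} {l r : OBTree C}
    (hv : VoteConsistent v (node l r)) {A : Finset C}
    (hA : ∀ a ∈ A, a ∈ (node l r).leavesList) :
    Separates v A (A.filter (· ∈ l.leavesList)) := by
  have hB : ∀ b ∈ A.filter (· ∈ l.leavesList), b ∈ l.leavesList :=
    fun b hb => (Finset.mem_filter.1 hb).2
  have hAB : ∀ a ∈ A \ A.filter (· ∈ l.leavesList), a ∈ r.leavesList := by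
    intro a ha
    simp only [Finset.mem_sdiff, Finset.mem_filter, not_and] at ha
    simpa [leavesList, ha.2 ha.1] using hA a ha.1
  rcases hv.2.2 with h | h
  · exact Or.inl fun b hb a ha => h b (hB b hb) a (hAB a ha)
  · exact Or.inr fun b hb a ha => h b (hB b hb) a (hAB a ha)

theorem exists_separates_of_forall_mem_leavesList [DecidableEq C] (T : OBTree C) {A : Finset C}
    (hA : ∀ a ∈ A, a ∈ T.leavesList) (hcard : 2 ≤ A.card) :
    ∃ B : Finset C, B.Nonempty ∧ B ⊂ A ∧
      ∀ v : C → C → Prop, VoteConsistent v T → Separates v A B := by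
  induction T with
  | leaf c => exact absurd (card_le_one_of_forall_mem_leavesList_leaf hA) (by omega)
  | node l r ihl ihr =>
    by_cases hl : ∀ a ∈ A, a ∈ l.leavesList
    · obtain ⟨B, hne, hsub, hsep⟩ := ihl hl
      exact ⟨B, hne, hsub, fun v hv => hsep v hv.1⟩
    by_cases hr : ∀ a ∈ A, a ∈ r.leavesList
    · obtain ⟨B, hne, hsub, hsep⟩ := ihr hr
      exact ⟨B, hne, hsub, fun v hv => hsep v hv.2.1⟩
    push Not at hl hr
    obtain ⟨a₁, ha₁A, ha₁l⟩ := hl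
    obtain ⟨a₂, ha₂A, ha₂r⟩ := hr
    have ha₂l : a₂ ∈ l.leavesList := by
      simpa [leavesList, ha₂r] using hA a₂ ha₂A
    refine ⟨A.filter (· ∈ l.leavesList), ⟨a₂, Finset.mem_filter.2 ⟨ha₂A, ha₂l⟩⟩,
      Finset.filter_ssubset.2 ⟨a₁, ha₁A, ha₁l⟩,
      fun v hv => separates_filter_mem_leavesList_left hv hA⟩

end OBTree

end

theorem tree_consistent_imp_groupSeparable_general
    {C : Type*} [DecidableEq C]
    (P : List (C → C → Prop))
    (T : OBTree C)
    (hall : ∀ c : C, c ∈ T.leavesList)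
    (hcons : ∀ v ∈ P, OBTree.VoteConsistent v T) :
    GroupSeparable P := by
  intro A hcard
  obtain ⟨B, hne, hsub, hsep⟩ :=
    T.exists_separates_of_forall_mem_leavesList (fun a _ => hall a) hcard
  exact ⟨B, hne, hsub, fun v hv => hsep v (hcons v hv)⟩

/-- If a profile over a finite candidate set is `T`-consistent for some ordered
binary tree `T` whose leaves are labeled bijectively with the candidates, then the
profile is group-separable. -/
theorem tree_consistent_imp_groupSeparable
    {C : Type*} [Fintype C] [DecidableEq C]
    (P : List (C → C → Prop))
    (hvotes : ∀ v ∈ P, IsStrictTotalOrder C v)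
    (T : OBTree C)
    (hnodup : T.leavesList.Nodup)
    (hall : ∀ c : C, c ∈ T.leavesList)
    (hcons : ∀ v ∈ P, OBTree.VoteConsistent v T) :
    GroupSeparable P :=
  tree_consistent_imp_groupSeparable_general P T hall hcons
end

section
/- Let C be a finite nonempty candidate set and let P be a preference profile over C. If P is group-separable, then there exists an ordered binary tree T over C such that P is T-consistent. -/
namespace OBTree

variable {C : Type*}

lemma coe_leavesList_node (l r : OBTree C) :
    ((node l r).leavesList : Multiset C) = l.leavesList + r.leavesList :=
  (Multiset.coe_add _ _).symm

lemma voteConsistent_node_of_separates {v : C → C → Prop} {l r : OBTree C}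
    {B D : Finset C} (hl : (l.leavesList : Multiset C) = B.val)
    (hr : (r.leavesList : Multiset C) = D.val) (hvl : VoteConsistent v l)
    (hvr : VoteConsistent v r)
    (hsep : (∀ b ∈ B, ∀ d ∈ D, v b d) ∨ (∀ b ∈ B, ∀ d ∈ D, v d b)) :
    VoteConsistent v (node l r) := by
  have hmem : ∀ {T : OBTree C} {X : Finset C}, (T.leavesList : Multiset C) = X.val →
      ∀ c, c ∈ T.leavesList ↔ c ∈ X := fun h c => by
    rw [← Multiset.mem_coe, h, Finset.mem_val]
  simp only [VoteConsistent, hmem hl, hmem hr]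
  exact ⟨hvl, hvr, hsep⟩

end OBTree

lemma Finset.val_add_val_sdiff {C : Type*} [DecidableEq C] {A B : Finset C} (h : B ⊆ A) :
    B.val + (A \ B).val = A.val := by
  rw [← Finset.disjUnion_val (h := Finset.disjoint_sdiff), Finset.disjUnion_eq_union,
    Finset.union_sdiff_of_subset h]

open OBTree in
theorem GroupSeparable.exists_voteConsistent_tree {C : Type*} [DecidableEq C]
    {P : List (C → C → Prop)} (hgs : GroupSeparable P) {A : Finset C} (hA : A.Nonempty) :
    ∃ T : OBTree C, (T.leavesList : Multiset C) = A.val ∧ ∀ v ∈ P, VoteConsistent v T := by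
  induction A using Finset.strongInduction with
  | _ A ih =>
  rcases Nat.lt_or_ge A.card 2 with hsmall | hlarge
  · obtain ⟨c, rfl⟩ := Finset.card_eq_one.mp (le_antisymm (by omega) hA.card_pos)
    exact ⟨leaf c, rfl, fun _ _ => trivial⟩
  · obtain ⟨B, hB, hBA, hsep⟩ := hgs A hlarge
    obtain ⟨l, hl, hlP⟩ := ih B hBA hB
    obtain ⟨r, hr, hrP⟩ := ih (A \ B) (Finset.sdiff_ssubset hBA.subset hB)
      (Finset.sdiff_nonempty.mpr hBA.not_subset)
    refine ⟨node l r, ?_, fun v hv => ?_⟩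
    · rw [coe_leavesList_node, hl, hr, Finset.val_add_val_sdiff hBA.subset]
    · exact voteConsistent_node_of_separates hl hr (hlP v hv) (hrP v hv) (hsep v hv)

theorem groupSeparable_imp_tree_consistent_general
    {C : Type*} [Fintype C] [DecidableEq C] [Nonempty C]
    (P : List (C → C → Prop))
    (hgs : GroupSeparable P) :
    ∃ T : OBTree C, T.leavesList.Nodup ∧ (∀ c : C, c ∈ T.leavesList) ∧
      ∀ v ∈ P, OBTree.VoteConsistent v T := by
  obtain ⟨T, hT, hP⟩ := hgs.exists_voteConsistent_tree Finset.univ_nonempty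
  refine ⟨T, ?_, fun c => ?_, hP⟩
  · rw [← Multiset.coe_nodup, hT]
    exact Finset.univ.nodup
  · rw [← Multiset.mem_coe, hT]
    exact Finset.mem_univ c

/-- If a profile over a finite nonempty candidate set is group-separable, then there
exists an ordered binary tree `T` whose leaves are labeled bijectively with the
candidates such that the profile is `T`-consistent. -/
theorem groupSeparable_imp_tree_consistent
    {C : Type*} [Fintype C] [DecidableEq C] [Nonempty C]
    (P : List (C → C → Prop))
    (hvotes : ∀ v ∈ P, IsStrictTotalOrder C v)
    (hgs : GroupSeparable P) :
    ∃ T : OBTree C, T.leavesList.Nodup ∧ (∀ c : C, c ∈ T.leavesList) ∧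
      ∀ v ∈ P, OBTree.VoteConsistent v T :=
  groupSeparable_imp_tree_consistent_general P hgs
end

section
/- Fix i ∈ {1,2,3}. Let P be a finite set of votes over a candidate set C, and suppose P is partitioned as P = U ∪ V (with U and V disjoint) where neither U nor V contains any i-minor. Then for every triple T = {a,b,c} ⊆ C of three distinct candidates such that the set P^i_{T,x} = {v ∈ P : x is ranked in the i-th position in the restriction of v to T} is nonempty for every x ∈ T, there is at most one candidate x ∈ T for which both U ∩ P^i_{T,x} ≠ ∅ and V ∩ P^i_{T,x} ≠ ∅ hold. -/
/-!
If two distinct candidates `x, y` of the triple were both split, the third candidate `z` is ranked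
`i`-th (within the triple) by some vote `w ∈ P = U ∪ V`. Whichever side `w` lies on, that side also
contains a vote ranking `x` and a vote ranking `y` `i`-th, and these three votes are distinct since
a vote ranks only one candidate of the triple `i`-th: they form an `i`-minor.
-/

/-- `PosOf i v x y z` says that candidate `x` is ranked in the `i`-th position
(for `i ∈ {1,2,3}`) in the restriction of the vote `v` (a strict linear order,
`v a b` meaning `a` is ranked above `b`) to the triple `{x, y, z}`. -/
def PosOf {C : Type*} (i : ℕ) (v : C → C → Prop) (x y z : C) : Prop :=
  match i with
  | 1 => v x y ∧ v x z
  | 2 => (v y x ∧ v x z) ∨ (v z x ∧ v x y)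
  | 3 => v y x ∧ v z x
  | _ => False

/-- `InPosTriple i v a b c x` says that `x ∈ {a, b, c}` and `x` is ranked in the
`i`-th position in the restriction of the vote `v` to the triple `{a, b, c}`. -/
def InPosTriple {C : Type*} (i : ℕ) (v : C → C → Prop) (a b c x : C) : Prop :=
  (x = a ∧ PosOf i v a b c) ∨ (x = b ∧ PosOf i v b a c) ∨ (x = c ∧ PosOf i v c a b)

/-- A set `W` of votes contains an `i`-minor: there are three distinct votes in `W`
and three distinct candidates such that each of the candidates appears in the `i`-th
position (in the restriction to the triple) of exactly one of the three votes. -/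
def HasIMinor {C : Type*} (i : ℕ) (W : Set (C → C → Prop)) : Prop :=
  ∃ u ∈ W, ∃ v ∈ W, ∃ w ∈ W, u ≠ v ∧ u ≠ w ∧ v ≠ w ∧
    ∃ a b c : C, a ≠ b ∧ a ≠ c ∧ b ≠ c ∧
      PosOf i u a b c ∧ PosOf i v b a c ∧ PosOf i w c a b

section Votes

variable {C : Type*} {i : ℕ} {v : C → C → Prop} {a b c x y z : C}

theorem PosOf.swap_right : PosOf i v x y z ↔ PosOf i v x z y := by
  match i with
  | 0 | n + 4 => exact Iff.rfl
  | 1 | 2 | 3 => simp only [PosOf]; tauto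

theorem PosOf.not_swap_left [IsStrictOrder C v] (h : PosOf i v x y z) :
    ¬ PosOf i v y x z := by
  match i with
  | 0 | n + 4 => exact h.elim
  | 1 => exact fun hyx => asymm h.1 hyx.1
  | 3 => exact fun hxy => asymm hxy.1 h.1
  | 2 =>
    rcases h with ⟨hyx, hxz⟩ | ⟨hzx, hxy⟩ <;> rintro (⟨hxy, hyz⟩ | ⟨hzy, hyx⟩)
    · exact asymm hyx hxy
    · exact asymm hyx (_root_.trans hxz hzy)
    · exact asymm hxy (_root_.trans hyz hzx)
    · exact asymm hxy hyx

theorem InPosTriple.unique [IsStrictOrder C v] (hx : InPosTriple i v a b c x)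
    (hy : InPosTriple i v a b c y) : x = y := by
  rcases hx with ⟨rfl, hx⟩ | ⟨rfl, hx⟩ | ⟨rfl, hx⟩ <;>
    rcases hy with ⟨rfl, hy⟩ | ⟨rfl, hy⟩ | ⟨rfl, hy⟩
  all_goals first
    | rfl
    | exact (hx.not_swap_left hy).elim
    | exact (hx.not_swap_left (PosOf.swap_right.mp hy)).elim
    | exact ((PosOf.swap_right.mp hx).not_swap_left hy).elim
    | exact ((PosOf.swap_right.mp hx).not_swap_left (PosOf.swap_right.mp hy)).elim

theorem InPosTriple.posOf_left (hab : a ≠ b) (hac : a ≠ c) (h : InPosTriple i v a b c a) :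
    PosOf i v a b c := by
  rcases h with ⟨_, h⟩ | ⟨rfl, _⟩ | ⟨rfl, _⟩
  exacts [h, absurd rfl hab, absurd rfl hac]

theorem InPosTriple.posOf_middle (hab : a ≠ b) (hbc : b ≠ c) (h : InPosTriple i v a b c b) :
    PosOf i v b a c := by
  rcases h with ⟨rfl, _⟩ | ⟨_, h⟩ | ⟨rfl, _⟩
  exacts [absurd rfl hab, h, absurd rfl hbc]

theorem InPosTriple.posOf_right (hac : a ≠ c) (hbc : b ≠ c) (h : InPosTriple i v a b c c) :
    PosOf i v c a b := by
  rcases h with ⟨rfl, _⟩ | ⟨rfl, _⟩ | ⟨_, h⟩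
  exacts [absurd rfl hac, absurd rfl hbc, h]

end Votes

section Minors

variable {C : Type*} {i : ℕ} {W : Set (C → C → Prop)} {a b c x y z : C}

theorem hasIMinor_of_forall_inPosTriple (hW : ∀ w ∈ W, IsStrictOrder C w)
    (hab : a ≠ b) (hac : a ≠ c) (hbc : b ≠ c)
    (h : ∀ t ∈ ({a, b, c} : Set C), ∃ w ∈ W, InPosTriple i w a b c t) : HasIMinor i W := by
  obtain ⟨p, hpW, hp⟩ := h a (by simp)
  obtain ⟨q, hqW, hq⟩ := h b (by simp)
  obtain ⟨r, hrW, hr⟩ := h c (by simp)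
  have := hW p hpW
  have := hW q hqW
  refine ⟨p, hpW, q, hqW, r, hrW, ?_, ?_, ?_, a, b, c, hab, hac, hbc,
    hp.posOf_left hab hac, hq.posOf_middle hab hbc, hr.posOf_right hac hbc⟩
  · rintro rfl; exact hab (hp.unique hq)
  · rintro rfl; exact hac (hp.unique hr)
  · rintro rfl; exact hbc (hq.unique hr)

theorem hasIMinor_of_subset_triple (hW : ∀ w ∈ W, IsStrictOrder C w)
    (hab : a ≠ b) (hac : a ≠ c) (hbc : b ≠ c) (hcover : ({a, b, c} : Set C) ⊆ {x, y, z})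
    (hx : ∃ w ∈ W, InPosTriple i w a b c x) (hy : ∃ w ∈ W, InPosTriple i w a b c y)
    (hz : ∃ w ∈ W, InPosTriple i w a b c z) : HasIMinor i W :=
  hasIMinor_of_forall_inPosTriple hW hab hac hbc fun _ ht => by
    rcases hcover ht with rfl | rfl | rfl <;> assumption

end Minors

theorem exists_mem_triple_subset_of_ne {α : Type*} {a b c x y : α}
    (hx : x ∈ ({a, b, c} : Set α)) (hy : y ∈ ({a, b, c} : Set α)) (hxy : x ≠ y) :
    ∃ z ∈ ({a, b, c} : Set α), ({a, b, c} : Set α) ⊆ {x, y, z} := by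
  simp only [Set.mem_insert_iff, Set.mem_singleton_iff] at hx hy
  rcases hx with rfl | rfl | rfl <;> rcases hy with rfl | rfl | rfl
  all_goals first
    | exact absurd rfl hxy
    | exact ⟨a, by simp, by intro t; simp only [Set.mem_insert_iff, Set.mem_singleton_iff]; tauto⟩
    | exact ⟨b, by simp, by intro t; simp only [Set.mem_insert_iff, Set.mem_singleton_iff]; tauto⟩
    | exact ⟨c, by simp, by intro t; simp only [Set.mem_insert_iff, Set.mem_singleton_iff]; tauto⟩

theorem at_most_one_split_candidate_general
    {C : Type*} (i : ℕ)
    (P U V : Set (C → C → Prop))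
    (hvotes : ∀ v ∈ P, IsStrictTotalOrder C v)
    (hUV : U ∪ V = P)
    (hU : ¬ HasIMinor i U) (hV : ¬ HasIMinor i V)
    (a b c : C) (hab : a ≠ b) (hac : a ≠ c) (hbc : b ≠ c)
    (hdanger : ∀ x ∈ ({a, b, c} : Set C), ∃ v ∈ P, InPosTriple i v a b c x) :
    ∀ x ∈ ({a, b, c} : Set C), ∀ y ∈ ({a, b, c} : Set C),
      ((∃ u ∈ U, InPosTriple i u a b c x) ∧ (∃ v ∈ V, InPosTriple i v a b c x)) →
      ((∃ u ∈ U, InPosTriple i u a b c y) ∧ (∃ v ∈ V, InPosTriple i v a b c y)) →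
      x = y := by
  rintro x hx y hy ⟨hxU, hxV⟩ ⟨hyU, hyV⟩
  by_contra hxy
  obtain ⟨z, hz, hcover⟩ := exists_mem_triple_subset_of_ne hx hy hxy
  obtain ⟨w, hwP, hwz⟩ := hdanger z hz
  have hstrict : ∀ w ∈ P, IsStrictOrder C w := fun w hw => (hvotes w hw).toIsStrictOrder
  rw [← hUV] at hwP hstrict
  rcases hwP with hwU | hwV
  · exact hU <| hasIMinor_of_subset_triple (fun w hw => hstrict w (.inl hw)) hab hac hbc hcover
      hxU hyU ⟨w, hwU, hwz⟩
  · exact hV <| hasIMinor_of_subset_triple (fun w hw => hstrict w (.inr hw)) hab hac hbc hcover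
      hxV hyV ⟨w, hwV, hwz⟩

/-- Fix `i ∈ {1,2,3}`. If a finite set of votes `P` is partitioned as `P = U ∪ V`
with `U, V` disjoint and neither `U` nor `V` contains an `i`-minor, then for every
triple `{a, b, c}` of distinct candidates such that `P^i_{T,x} ≠ ∅` for every
`x ∈ {a, b, c}` (where `P^i_{T,x}` is the set of votes of `P` ranking `x` in the
`i`-th position within the triple), there is at most one `x ∈ {a, b, c}` such that
both `U ∩ P^i_{T,x} ≠ ∅` and `V ∩ P^i_{T,x} ≠ ∅`. -/
theorem at_most_one_split_candidate
    {C : Type*} (i : ℕ) (hi : i = 1 ∨ i = 2 ∨ i = 3)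
    (P U V : Set (C → C → Prop)) (hfin : P.Finite)
    (hvotes : ∀ v ∈ P, IsStrictTotalOrder C v)
    (hUV : U ∪ V = P) (hdisj : Disjoint U V)
    (hU : ¬ HasIMinor i U) (hV : ¬ HasIMinor i V)
    (a b c : C) (hab : a ≠ b) (hac : a ≠ c) (hbc : b ≠ c)
    (hdanger : ∀ x ∈ ({a, b, c} : Set C), ∃ v ∈ P, InPosTriple i v a b c x) :
    ∀ x ∈ ({a, b, c} : Set C), ∀ y ∈ ({a, b, c} : Set C),
      ((∃ u ∈ U, InPosTriple i u a b c x) ∧ (∃ v ∈ V, InPosTriple i v a b c x)) →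
      ((∃ u ∈ U, InPosTriple i u a b c y) ∧ (∃ v ∈ V, InPosTriple i v a b c y)) →
      x = y :=
  at_most_one_split_candidate_general i P U V hvotes hUV hU hV a b c hab hac hbc hdanger
end

section
/- Let C = {c₁,…,c_m} be a finite candidate set with a fixed enumeration and let P be a preference profile over C. Then P is group-separable on the caterpillar (c₁,…,c_m) if and only if for every vote v in P there exists a subset C' ⊆ C such that v ranks all candidates of C' above all candidates of C∖C', v ranks the candidates of C' in increasing order of their indices, and v ranks the candidates of C∖C' in decreasing order of their indices. -/
/-- A profile (list of votes, each a strict linear order with `v a b` meaning `a`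
is ranked above `b`) over a linearly ordered candidate set is group-separable on
the caterpillar given by the order (the enumeration `c₁, …, c_m` in increasing
order): every vote ranks each candidate `cᵢ` above all later candidates, or below
all later candidates. -/
def GSCaterpillar {C : Type*} [LT C] (P : List (C → C → Prop)) : Prop :=
  ∀ v ∈ P, ∀ i : C, (∀ j : C, i < j → v i j) ∨ (∀ j : C, i < j → v j i)

/-! For the forward direction take `A` to be the set of candidates that the vote ranks above all
later candidates; every other candidate is then ranked below all later ones. -/

theorem exists_updown_split_of_tail_separable {C : Type*} [LinearOrder C] {v : C → C → Prop}
    (hv : ∀ i : C, (∀ j : C, i < j → v i j) ∨ (∀ j : C, i < j → v j i)) :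
    ∃ A : Set C,
      (∀ x ∈ A, ∀ y ∉ A, v x y) ∧
      (∀ x ∈ A, ∀ y ∈ A, x < y → v x y) ∧
      (∀ x ∉ A, ∀ y ∉ A, x < y → v y x) := by
  refine ⟨{i | ∀ j, i < j → v i j}, ?_, fun x hx y _ hxy => hx y hxy,
    fun x hx y _ hxy => (hv x).resolve_left hx y hxy⟩
  intro x hx y hy
  rcases lt_trichotomy x y with hxy | rfl | hyx
  · exact hx y hxy
  · exact absurd hx hy
  · exact (hv y).resolve_left hy x hyx

theorem tail_separable_of_updown_split {C : Type*} [LT C] {v : C → C → Prop} {A : Set C}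
    (hsplit : ∀ x ∈ A, ∀ y ∉ A, v x y)
    (hup : ∀ x ∈ A, ∀ y ∈ A, x < y → v x y)
    (hdown : ∀ x ∉ A, ∀ y ∉ A, x < y → v y x) (i : C) :
    (∀ j : C, i < j → v i j) ∨ (∀ j : C, i < j → v j i) := by
  by_cases hi : i ∈ A
  · refine .inl fun j hij => ?_
    by_cases hj : j ∈ A
    · exact hup i hi j hj hij
    · exact hsplit i hi j hj
  · refine .inr fun j hij => ?_
    by_cases hj : j ∈ A
    · exact hsplit j hj i hi
    · exact hdown i hi j hj hij

theorem gsCaterpillar_iff_updown_general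
    {m : ℕ} (P : List (Fin m → Fin m → Prop)) :
    GSCaterpillar P ↔
      ∀ v ∈ P, ∃ A : Set (Fin m),
        (∀ x ∈ A, ∀ y ∉ A, v x y) ∧
        (∀ x ∈ A, ∀ y ∈ A, x < y → v x y) ∧
        (∀ x ∉ A, ∀ y ∉ A, x < y → v y x) :=
  forall₂_congr fun _ _ =>
    ⟨exists_updown_split_of_tail_separable,
      fun ⟨_, hsplit, hup, hdown⟩ => tail_separable_of_updown_split hsplit hup hdown⟩

/-- A profile over the candidate set `{c₁, …, c_m}` (identified with `Fin m` via the
fixed enumeration) is group-separable on the caterpillar `(c₁, …, c_m)` if and only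
if every vote `v` has a set of candidates `A` such that `v` ranks all of `A` above
all of its complement, ranks the candidates of `A` in increasing order of indices,
and ranks the candidates outside `A` in decreasing order of indices. -/
theorem gsCaterpillar_iff_updown
    {m : ℕ} (P : List (Fin m → Fin m → Prop))
    (hvotes : ∀ v ∈ P, IsStrictTotalOrder (Fin m) v) :
    GSCaterpillar P ↔
      ∀ v ∈ P, ∃ A : Set (Fin m),
        (∀ x ∈ A, ∀ y ∉ A, v x y) ∧
        (∀ x ∈ A, ∀ y ∈ A, x < y → v x y) ∧
        (∀ x ∉ A, ∀ y ∉ A, x < y → v y x) :=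
  gsCaterpillar_iff_updown_general P
end

section
/- A preference profile P over a finite candidate set C is caterpillar group-separable if and only if (1) P is medium-restricted (contains no 2-minor), and (2) P contains no 2×4 minor consisting of two votes u, v and four distinct candidates a, b, c, d such that, in the restrictions to {a,b,c,d}, u ranks a first and d last while v ranks b first and c last. -/
/-- A profile (list of votes, each a strict linear order with `v a b` meaning `a`
is ranked above `b`) over a finite candidate set `C` is caterpillar group-separable:
there is an enumeration of `C` (equivalently, a strict total order `lt` on `C`) such
that every vote ranks each candidate above all later candidates (w.r.t. `lt`) or
below all later candidates. -/
def CatGS {C : Type*} (P : List (C → C → Prop)) : Prop :=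
  ∃ lt : C → C → Prop, IsStrictTotalOrder C lt ∧
    ∀ v ∈ P, ∀ x : C, (∀ y : C, lt x y → v x y) ∨ (∀ y : C, lt x y → v y x)

/-- `x` is ranked in the middle position of the triple `{x, y, z}` by the vote `v`. -/
def MiddleOf {C : Type*} (v : C → C → Prop) (x y z : C) : Prop :=
  (v y x ∧ v x z) ∨ (v z x ∧ v x y)

/-- The profile `P` contains a 2-minor: three votes and three distinct candidates
such that each candidate is ranked in the middle position (of the restriction to the
triple) by exactly one of the three votes. -/
def Has2Minor {C : Type*} (P : List (C → C → Prop)) : Prop :=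
  ∃ u ∈ P, ∃ v ∈ P, ∃ w ∈ P, ∃ a b c : C, a ≠ b ∧ a ≠ c ∧ b ≠ c ∧
    MiddleOf u a b c ∧ MiddleOf v b a c ∧ MiddleOf w c a b

/-- The profile `P` contains a 2×4 minor of the forbidden form for caterpillar
group-separability: two votes `u, v` and four distinct candidates `a, b, c, d` such
that, in the restrictions to `{a, b, c, d}`, `u` ranks `a` first and `d` last while
`v` ranks `b` first and `c` last. -/
def HasCat24Minor {C : Type*} (P : List (C → C → Prop)) : Prop :=
  ∃ u ∈ P, ∃ v ∈ P, ∃ a b c d : C,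
    a ≠ b ∧ a ≠ c ∧ a ≠ d ∧ b ≠ c ∧ b ≠ d ∧ c ≠ d ∧
    (u a b ∧ u a c ∧ u a d ∧ u b d ∧ u c d) ∧
    (v b a ∧ v b c ∧ v b d ∧ v a c ∧ v d c)

/-!
Necessity: along the caterpillar, each vote ranks a candidate above or below all later ones,
so the earliest candidate of any set is never ranked between two others of that set; in each
forbidden minor, however, every candidate is ranked in the middle by some vote.

Sufficiency: by induction it is enough to find a candidate that every vote ranks first or
last, to be put at the head of the caterpillar. Let `a` and `d` be the top and bottom of one
vote. A vote ranking both `a` and `d` strictly inside gives a 2×4 minor together with the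
first vote. Otherwise a vote ranking `a` inside ranks `d` at an end, a vote ranking `d` inside
ranks `a` at an end, and these three votes contain a 2-minor or the last two a 2×4 minor.
-/

open Finset Function

section

variable {C : Type*} {P : List (C → C → Prop)} {v : C → C → Prop}

theorem Finset.exists_rel_least (r : C → C → Prop) [IsStrictTotalOrder C r] (s : Finset C)
    (hs : s.Nonempty) : ∃ m ∈ s, ∀ y ∈ s, y ≠ m → r m y := by
  classical
  let := linearOrderOfSTO r
  exact ⟨s.min' hs, s.min'_mem hs, fun y hy hne => lt_of_le_of_ne (s.min'_le y hy) hne.symm⟩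

section MiddleOf

variable {x y z : C}

theorem middleOf_comm : MiddleOf v x y z ↔ MiddleOf v x z y := or_comm

theorem MiddleOf.ne_left [Std.Irrefl v] (h : MiddleOf v x y z) : x ≠ y := by
  rintro rfl
  rcases h with ⟨h, -⟩ | ⟨-, h⟩ <;> exact irrefl _ h

theorem MiddleOf.ne_right [Std.Irrefl v] (h : MiddleOf v x y z) : x ≠ z :=
  (middleOf_comm.mp h).ne_left

theorem MiddleOf.left_ne_right [Std.Asymm v] (h : MiddleOf v x y z) : y ≠ z := by
  rintro rfl
  rcases h with ⟨h₁, h₂⟩ | ⟨h₁, h₂⟩ <;> exact asymm h₁ h₂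

theorem MiddleOf.orientation [IsStrictOrder C v] {a b c d : C} (hb : MiddleOf v b a d)
    (hc : MiddleOf v c a d) :
    (v a b ∧ v b d ∧ v a c ∧ v c d) ∨ (v d b ∧ v b a ∧ v d c ∧ v c a) := by
  rcases hb with ⟨h₁, h₂⟩ | ⟨h₁, h₂⟩ <;> rcases hc with ⟨h₃, h₄⟩ | ⟨h₃, h₄⟩
  · exact Or.inl ⟨h₁, h₂, h₃, h₄⟩
  · exact (asymm (trans_of v h₁ h₂) (trans_of v h₃ h₄)).elim
  · exact (asymm (trans_of v h₁ h₂) (trans_of v h₃ h₄)).elim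
  · exact Or.inr ⟨h₁, h₂, h₃, h₄⟩

end MiddleOf

theorem not_middleOf_of_forall_rel [Std.Asymm v] {lt : C → C → Prop} {x y z : C}
    (hx : (∀ w, lt x w → v x w) ∨ (∀ w, lt x w → v w x)) (hy : lt x y) (hz : lt x z) :
    ¬ MiddleOf v x y z := by
  rcases hx with H | H <;> rintro (⟨h₁, h₂⟩ | ⟨h₁, h₂⟩)
  exacts [asymm h₁ (H y hy), asymm h₁ (H z hz), asymm h₂ (H z hz), asymm h₂ (H y hy)]

theorem HasCat24Minor.exists_middleOf (h : HasCat24Minor P) :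
    ∃ u ∈ P, ∃ v ∈ P, ∃ a b c d : C,
      MiddleOf u b a d ∧ MiddleOf u c a d ∧ MiddleOf v a b c ∧ MiddleOf v d b c := by
  obtain ⟨u, hu, v, hv, a, b, c, d, -, -, -, -, -, -, ⟨u₁, u₂, -, u₄, u₅⟩, ⟨v₁, -, v₃, v₄, v₅⟩⟩ :=
    h
  exact ⟨u, hu, v, hv, a, b, c, d, Or.inl ⟨u₁, u₄⟩, Or.inl ⟨u₂, u₅⟩, Or.inl ⟨v₁, v₄⟩,
    Or.inl ⟨v₃, v₅⟩⟩

theorem hasCat24Minor_of_rel {u v : C → C → Prop} [IsStrictOrder C u] [IsStrictOrder C v]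
    (hu : u ∈ P) (hv : v ∈ P) {a b c d : C} (hab : u a b) (hbd : u b d) (hac : u a c)
    (hcd : u c d) (hba : v b a) (hac' : v a c) (hbd' : v b d) (hdc : v d c) :
    HasCat24Minor P :=
  ⟨u, hu, v, hv, a, b, c, d, ne_of_irrefl hab, ne_of_irrefl hac,
    ne_of_irrefl (trans_of u hab hbd), ne_of_irrefl (trans_of v hba hac'), ne_of_irrefl hbd,
    ne_of_irrefl hcd, ⟨hab, hac, trans_of u hab hbd, hbd, hcd⟩,
    ⟨hba, trans_of v hba hac', hbd', hac', hdc⟩⟩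

theorem hasCat24Minor_of_middleOf {u v : C → C → Prop} [IsStrictOrder C u] [IsStrictOrder C v]
    (hu : u ∈ P) (hv : v ∈ P) {a b c d : C} (hub : MiddleOf u b a d) (huc : MiddleOf u c a d)
    (hva : MiddleOf v a b c) (hvd : MiddleOf v d b c) : HasCat24Minor P := by
  rcases hub.orientation huc with ⟨u₁, u₂, u₃, u₄⟩ | ⟨u₁, u₂, u₃, u₄⟩ <;>
    rcases hva.orientation hvd with ⟨v₁, v₂, v₃, v₄⟩ | ⟨v₁, v₂, v₃, v₄⟩
  · exact hasCat24Minor_of_rel hu hv u₁ u₂ u₃ u₄ v₁ v₂ v₃ v₄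
  · exact hasCat24Minor_of_rel hu hv u₃ u₄ u₁ u₂ v₁ v₂ v₃ v₄
  · exact hasCat24Minor_of_rel hu hv u₁ u₂ u₃ u₄ v₃ v₄ v₁ v₂
  · exact hasCat24Minor_of_rel hu hv u₃ u₄ u₁ u₂ v₃ v₄ v₁ v₂

section Necessity

variable (hP : ∀ v ∈ P, Std.Asymm v)
include hP

theorem CatGS.exists_not_middleOf (h : CatGS P) (s : Finset C) (hs : s.Nonempty) :
    ∃ m ∈ s, ∀ v ∈ P, ∀ y ∈ s, ∀ z ∈ s, ¬ MiddleOf v m y z := by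
  obtain ⟨lt, hlt, hgs⟩ := h
  obtain ⟨m, hm, hmin⟩ := s.exists_rel_least lt hs
  refine ⟨m, hm, fun v hv y hy z hz hmid => ?_⟩
  have := hP v hv
  exact not_middleOf_of_forall_rel (hgs v hv m) (hmin y hy hmid.ne_left.symm)
    (hmin z hz hmid.ne_right.symm) hmid

theorem CatGS.not_has2Minor (h : CatGS P) : ¬ Has2Minor P := by
  classical
  rintro ⟨u, hu, v, hv, w, hw, a, b, c, -, -, -, hua, hvb, hwc⟩
  obtain ⟨m, hm, hnot⟩ := h.exists_not_middleOf hP {a, b, c} (insert_nonempty _ _)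
  simp only [mem_insert, mem_singleton] at hm
  rcases hm with rfl | rfl | rfl
  · exact hnot u hu _ (by simp) _ (by simp) hua
  · exact hnot v hv _ (by simp) _ (by simp) hvb
  · exact hnot w hw _ (by simp) _ (by simp) hwc

theorem CatGS.not_hasCat24Minor (h : CatGS P) : ¬ HasCat24Minor P := by
  classical
  intro h24
  obtain ⟨u, hu, v, hv, a, b, c, d, hub, huc, hva, hvd⟩ := h24.exists_middleOf
  obtain ⟨m, hm, hnot⟩ := h.exists_not_middleOf hP {a, b, c, d} (insert_nonempty _ _)
  simp only [mem_insert, mem_singleton] at hm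
  rcases hm with rfl | rfl | rfl | rfl
  · exact hnot v hv _ (by simp) _ (by simp) hva
  · exact hnot u hu _ (by simp) _ (by simp) hub
  · exact hnot u hu _ (by simp) _ (by simp) huc
  · exact hnot v hv _ (by simp) _ (by simp) hvd

end Necessity

def IsExtremeOn (v : C → C → Prop) (S : Finset C) (x : C) : Prop :=
  (∀ y ∈ S, y ≠ x → v x y) ∨ (∀ y ∈ S, y ≠ x → v y x)

section Extreme

variable {S : Finset C} {a e : C}

theorem exists_middleOf_of_not_isExtremeOn [Std.Trichotomous v] (ha : ¬ IsExtremeOn v S a)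
    (he : IsExtremeOn v S e) (haS : a ∈ S) (hea : e ≠ a) : ∃ x ∈ S, MiddleOf v a e x := by
  simp only [IsExtremeOn, not_or, not_forall] at ha
  obtain ⟨⟨y, hyS, hya, hay⟩, ⟨z, hzS, hza, hza'⟩⟩ := ha
  have hya : v y a := (trichotomous_of v a y).resolve_left hay |>.resolve_left (Ne.symm hya)
  have haz : v a z := (trichotomous_of v z a).resolve_left hza' |>.resolve_left hza
  rcases he with he | he
  · exact ⟨z, hzS, Or.inl ⟨he a haS hea.symm, haz⟩⟩
  · exact ⟨y, hyS, Or.inr ⟨hya, he a haS hea.symm⟩⟩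

/-- `v` ranks `e, y, a, x` in this order or in the reverse one. -/
theorem middleOf_of_isExtremeOn_of_not_middleOf [IsStrictTotalOrder C v] {x y : C}
    (he : IsExtremeOn v S e) (haS : a ∈ S) (hyS : y ∈ S) (hx : MiddleOf v a e x)
    (hy : ¬ MiddleOf v a e y) (hya : y ≠ a) (hye : y ≠ e) : MiddleOf v y e x := by
  have hae : a ≠ e := hx.ne_left
  rcases he with he | he
  · have hax : v a x := hx.elim And.right fun h => (asymm h.2 (he a haS hae)).elim
    have hya' : v y a := (trichotomous_of v a y).resolve_left
      (fun h => hy (Or.inl ⟨he a haS hae, h⟩)) |>.resolve_left hya.symm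
    exact Or.inl ⟨he y hyS hye, trans_of v hya' hax⟩
  · have hxa : v x a := hx.elim (fun h => (asymm h.1 (he a haS hae)).elim) And.left
    have hay : v a y := (trichotomous_of v y a).resolve_left
      (fun h => hy (Or.inr ⟨h, he a haS hae⟩)) |>.resolve_left hya
    exact Or.inr ⟨trans_of v hxa hay, he y hyS hye⟩

theorem hasCat24Minor_of_not_isExtremeOn {u g : C → C → Prop} [IsStrictOrder C u]
    [IsStrictTotalOrder C g] (hu : u ∈ P) (hg : g ∈ P) {d : C} (haS : a ∈ S) (hdS : d ∈ S)
    (ha : ∀ y ∈ S, y ≠ a → u a y) (hd : ∀ y ∈ S, y ≠ d → u y d)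
    (hga : ¬ IsExtremeOn g S a) (hgd : ¬ IsExtremeOn g S d) : HasCat24Minor P := by
  obtain ⟨b, hbS, hb⟩ := S.exists_rel_least g ⟨a, haS⟩
  obtain ⟨c, hcS, hc⟩ := S.exists_rel_least (swap g) ⟨a, haS⟩
  have hba : b ≠ a := fun h => hga (Or.inl (h ▸ hb))
  have hbd : b ≠ d := fun h => hgd (Or.inl (h ▸ hb))
  have hca : c ≠ a := fun h => hga (Or.inr (h ▸ hc))
  have hcd : c ≠ d := fun h => hgd (Or.inr (h ▸ hc))
  exact hasCat24Minor_of_middleOf hu hg (a := a) (d := d)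
    (Or.inl ⟨ha b hbS hba, hd b hbS hbd⟩) (Or.inl ⟨ha c hcS hca, hd c hcS hcd⟩)
    (Or.inl ⟨hb a haS hba.symm, hc a haS hca.symm⟩)
    (Or.inl ⟨hb d hdS hbd.symm, hc d hdS hcd.symm⟩)

end Extreme

/-- The candidates of `S` laid out on a caterpillar in increasing order of the rank `f`. -/
def IsCaterpillarRanking (P : List (C → C → Prop)) (S : Finset C) (f : C → ℕ) : Prop :=
  Set.InjOn f S ∧
    ∀ v ∈ P, ∀ x ∈ S, (∀ y ∈ S, f x < f y → v x y) ∨ (∀ y ∈ S, f x < f y → v y x)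

theorem IsCaterpillarRanking.of_erase [DecidableEq C] {S : Finset C} {f : C → ℕ} {x : C}
    (hf : IsCaterpillarRanking P (S.erase x) f) (hx : ∀ v ∈ P, IsExtremeOn v S x) :
    IsCaterpillarRanking P S (fun p => if p = x then 0 else f p + 1) := by
  set g : C → ℕ := fun p => if p = x then 0 else f p + 1
  have hlt : ∀ p q, g p < g q → q ≠ x ∧ (p ≠ x → f p < f q) := by
    intro p q h
    by_cases hq : q = x
    · simp [g, hq] at h
    · refine ⟨hq, fun hp => ?_⟩
      simpa [g, hp, hq] using h
  refine ⟨fun p hp q hq hpq => ?_, fun v hv p hp => ?_⟩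
  · by_cases hpx : p = x <;> by_cases hqx : q = x <;>
      simp only [g, hpx, hqx, if_true, if_false] at hpq
    · exact hpx.trans hqx.symm
    · omega
    · omega
    · exact hf.1 (mem_erase.2 ⟨hpx, hp⟩) (mem_erase.2 ⟨hqx, hq⟩) (by omega)
  by_cases hpx : p = x
  · subst hpx
    exact (hx v hv).imp (fun H y hy h => H y hy (hlt p y h).1)
      (fun H y hy h => H y hy (hlt p y h).1)
  · exact (hf.2 v hv p (mem_erase.2 ⟨hpx, hp⟩)).imp
      (fun H y hy h => H y (mem_erase.2 ⟨(hlt p y h).1, hy⟩) ((hlt p y h).2 hpx))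
      (fun H y hy h => H y (mem_erase.2 ⟨(hlt p y h).1, hy⟩) ((hlt p y h).2 hpx))

theorem CatGS.of_isCaterpillarRanking [Fintype C] {f : C → ℕ}
    (hf : IsCaterpillarRanking P univ f) : CatGS P :=
  ⟨(· < ·) on f, (Set.injOn_univ.mp (by simpa using hf.1)).isStrictTotalOrder_onFun _,
    fun v hv x => by simpa using hf.2 v hv x (mem_univ x)⟩

theorem has2Minor_or_hasCat24Minor {u v w : C → C → Prop} [IsStrictTotalOrder C v]
    [IsStrictTotalOrder C w] (hu : u ∈ P) (hv : v ∈ P) (hw : w ∈ P) {S : Finset C} {a d : C}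
    (haS : a ∈ S) (hdS : d ∈ S) (had : a ≠ d)
    (hu_mid : ∀ z ∈ S, z ≠ a → z ≠ d → MiddleOf u z a d)
    (hva : ¬ IsExtremeOn v S a) (hvd : IsExtremeOn v S d)
    (hwd : ¬ IsExtremeOn w S d) (hwa : IsExtremeOn w S a) :
    Has2Minor P ∨ HasCat24Minor P := by
  obtain ⟨x, hxS, hvx⟩ := exists_middleOf_of_not_isExtremeOn hva hvd haS had.symm
  obtain ⟨y, hyS, hwy⟩ := exists_middleOf_of_not_isExtremeOn hwd hwa hdS had
  have hya : y ≠ a := hwy.left_ne_right.symm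
  have hyd : y ≠ d := hwy.ne_right.symm
  have hxa : x ≠ a := hvx.ne_right.symm
  have hxd : x ≠ d := hvx.left_ne_right.symm
  by_cases hvy : MiddleOf v a d y
  · exact Or.inl ⟨u, hu, v, hv, w, hw, y, a, d, hya, hyd, had, hu_mid y hyS hya hyd,
      middleOf_comm.mp hvy, middleOf_comm.mp hwy⟩
  by_cases hwx : MiddleOf w d a x
  · exact Or.inl ⟨u, hu, v, hv, w, hw, x, a, d, hxa, hxd, had, hu_mid x hxS hxa hxd,
      middleOf_comm.mp hvx, middleOf_comm.mp hwx⟩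
  have hvyx : MiddleOf v y d x :=
    middleOf_of_isExtremeOn_of_not_middleOf hvd haS hyS hvx hvy hya hyd
  have hwxy : MiddleOf w x a y :=
    middleOf_of_isExtremeOn_of_not_middleOf hwa hdS hxS hwy hwx hxd hxa
  exact Or.inr (hasCat24Minor_of_middleOf hv hw hvyx hvx (middleOf_comm.mp hwy)
    (middleOf_comm.mp hwxy))

section Sufficiency

variable (hP : ∀ v ∈ P, IsStrictTotalOrder C v) (h2 : ¬ Has2Minor P) (h24 : ¬ HasCat24Minor P)
include hP h2 h24

theorem exists_forall_isExtremeOn (S : Finset C) (hS : S.Nonempty) :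
    ∃ x ∈ S, ∀ v ∈ P, IsExtremeOn v S x := by
  by_contra! hno
  obtain ⟨x₀, hx₀⟩ := hS
  obtain ⟨u, hu, -⟩ := hno x₀ hx₀
  have := hP u hu
  obtain ⟨a, haS, ha⟩ := S.exists_rel_least u ⟨x₀, hx₀⟩
  obtain ⟨d, hdS, hd⟩ := S.exists_rel_least (swap u) ⟨x₀, hx₀⟩
  obtain ⟨v, hv, hva⟩ := hno a haS
  obtain ⟨w, hw, hwd⟩ := hno d hdS
  have := hP v hv
  have := hP w hw
  have had : a ≠ d := by
    rintro rfl
    exact hva (Or.inl fun y hy hya => (asymm (ha y hy hya) (hd y hy hya)).elim)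
  have hvd : IsExtremeOn v S d := by
    by_contra hvd
    exact h24 (hasCat24Minor_of_not_isExtremeOn hu hv haS hdS ha hd hva hvd)
  have hwa : IsExtremeOn w S a := by
    by_contra hwa
    exact h24 (hasCat24Minor_of_not_isExtremeOn hu hw haS hdS ha hd hwa hwd)
  have hu_mid : ∀ z ∈ S, z ≠ a → z ≠ d → MiddleOf u z a d :=
    fun z hz hza hzd => Or.inl ⟨ha z hz hza, hd z hz hzd⟩
  exact (has2Minor_or_hasCat24Minor hu hv hw haS hdS had hu_mid hva hvd hwd hwa).elim h2 h24

theorem exists_isCaterpillarRanking (S : Finset C) : ∃ f, IsCaterpillarRanking P S f := by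
  classical
  induction S using Finset.strongInduction with | H S ih => ?_
  rcases S.eq_empty_or_nonempty with rfl | hS
  · exact ⟨0, by simp [IsCaterpillarRanking]⟩
  obtain ⟨x, hxS, hx⟩ := exists_forall_isExtremeOn hP h2 h24 S hS
  obtain ⟨f, hf⟩ := ih (S.erase x) (erase_ssubset hxS)
  exact ⟨_, hf.of_erase hx⟩

end Sufficiency

end

/-- A profile over a finite candidate set is caterpillar group-separable if and only
if it is medium-restricted (contains no 2-minor) and contains none of the forbidden
2×4 minors. -/
theorem catGS_iff_no_forbidden_minors
    {C : Type*} [Fintype C]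
    (P : List (C → C → Prop))
    (hvotes : ∀ v ∈ P, IsStrictTotalOrder C v) :
    CatGS P ↔ ¬ Has2Minor P ∧ ¬ HasCat24Minor P := by
  have hasymm : ∀ v ∈ P, Std.Asymm v := fun v hv => by have := hvotes v hv; infer_instance
  refine ⟨fun h => ⟨h.not_has2Minor hasymm, h.not_hasCat24Minor hasymm⟩, fun ⟨h2, h24⟩ => ?_⟩
  obtain ⟨f, hf⟩ := exists_isCaterpillarRanking hvotes h2 h24 univ
  exact CatGS.of_isCaterpillarRanking hf
end

section
/- Let P be a preference profile over a finite candidate set C with |C| ≥ 3. If no candidate of C is polarizing for every vote of P, then P contains a 2-minor, or P contains two votes u, v and four distinct candidates a, b, c, d such that, in the restrictions to {a,b,c,d}, u ranks a first and d last while v ranks b first and c last. -/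
/-- The candidate `x` is polarizing for the vote `v`: it is ranked first or last. -/
def Polarizing {C : Type*} (v : C → C → Prop) (x : C) : Prop :=
  (∀ y : C, y ≠ x → v x y) ∨ (∀ y : C, y ≠ x → v y x)

section

variable {C : Type*}

def RankedFirst (v : C → C → Prop) (x : C) : Prop :=
  ∀ y : C, y ≠ x → v x y

def RankedLast (v : C → C → Prop) (x : C) : Prop :=
  ∀ y : C, y ≠ x → v y x

section Vote

variable {v : C → C → Prop} {x y z : C}

theorem RankedFirst.eq [Std.Asymm v] (hx : RankedFirst v x) (hy : RankedFirst v y) : x = y := by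
  by_contra hxy
  exact asymm (hx y (Ne.symm hxy)) (hy x hxy)

theorem RankedLast.eq [Std.Asymm v] (hx : RankedLast v x) (hy : RankedLast v y) : x = y := by
  by_contra hxy
  exact asymm (hx y (Ne.symm hxy)) (hy x hxy)

theorem RankedFirst.ne_of_rankedLast [Std.Asymm v] [Nontrivial C] (hx : RankedFirst v x)
    (hy : RankedLast v y) : x ≠ y := by
  rintro rfl
  obtain ⟨z, hz⟩ := exists_ne x
  exact asymm (hx z hz) (hy z hz)

theorem Polarizing.rankedFirst_rankedLast_of_ne [Std.Asymm v] (hx : Polarizing v x)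
    (hy : Polarizing v y) (hxy : x ≠ y) :
    (RankedFirst v x ∧ RankedLast v y) ∨ (RankedFirst v y ∧ RankedLast v x) := by
  rcases hx with hx | hx <;> rcases hy with hy | hy
  · exact absurd (RankedFirst.eq hx hy) hxy
  · exact Or.inl ⟨hx, hy⟩
  · exact Or.inr ⟨hy, hx⟩
  · exact absurd (RankedLast.eq hx hy) hxy

theorem middleOf_of_polarizing [Std.Asymm v] (hy : Polarizing v y) (hz : Polarizing v z)
    (hyz : y ≠ z) (hxy : x ≠ y) (hxz : x ≠ z) : MiddleOf v x y z := by
  rcases hy.rankedFirst_rankedLast_of_ne hz hyz with ⟨hy, hz⟩ | ⟨hz, hy⟩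
  · exact Or.inl ⟨hy x hxy, hz x hxz⟩
  · exact Or.inr ⟨hz x hxz, hy x hxy⟩

variable [Finite C]

theorem exists_rankedFirst [Nonempty C] (v : C → C → Prop) [IsStrictTotalOrder C v] :
    ∃ x, RankedFirst v x := by
  obtain ⟨x, -, hx⟩ := (Finite.wellFounded_of_trans_of_irrefl v).has_min Set.univ Set.univ_nonempty
  refine ⟨x, fun y hyx => ?_⟩
  rcases trichotomous_of v x y with hxy | rfl | hyx'
  exacts [hxy, absurd rfl hyx, absurd hyx' (hx y trivial)]

theorem exists_rankedLast [Nonempty C] (v : C → C → Prop) [IsStrictTotalOrder C v] :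
    ∃ x, RankedLast v x :=
  exists_rankedFirst (Function.swap v)

theorem exists_polarizing [Nonempty C] (v : C → C → Prop) [IsStrictTotalOrder C v] :
    ∃ x, Polarizing v x :=
  (exists_rankedFirst v).imp fun _ => Or.inl

theorem Polarizing.exists_polarizing_ne [Nontrivial C] [IsStrictTotalOrder C v]
    (hx : Polarizing v x) : ∃ y, y ≠ x ∧ Polarizing v y := by
  rcases hx with hx | hx
  · obtain ⟨y, hy⟩ := exists_rankedLast v
    exact ⟨y, (RankedFirst.ne_of_rankedLast hx hy).symm, Or.inr hy⟩
  · obtain ⟨y, hy⟩ := exists_rankedFirst v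
    exact ⟨y, RankedFirst.ne_of_rankedLast hy hx, Or.inl hy⟩

end Vote

section Minor

variable {P : List (C → C → Prop)} {u v w : C → C → Prop} {a b c d : C}

theorem hasCat24Minor_of_rankedFirst_rankedLast (hu : u ∈ P) (hv : v ∈ P)
    (hua : RankedFirst u a) (hud : RankedLast u d) (hvb : RankedFirst v b) (hvc : RankedLast v c)
    (hab : a ≠ b) (hac : a ≠ c) (had : a ≠ d) (hbc : b ≠ c) (hbd : b ≠ d) (hcd : c ≠ d) :
    HasCat24Minor P :=
  ⟨u, hu, v, hv, a, b, c, d, hab, hac, had, hbc, hbd, hcd,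
    ⟨hua b hab.symm, hua c hac.symm, hua d had.symm, hud b hbd, hud c hcd⟩,
    ⟨hvb a hab, hvb c hbc.symm, hvb d hbd.symm, hvc a hac, hvc d hcd.symm⟩⟩

theorem hasCat24Minor_of_polarizing [Std.Asymm u] [Std.Asymm v] (hu : u ∈ P) (hv : v ∈ P)
    (hua : Polarizing u a) (hud : Polarizing u d) (hvb : Polarizing v b) (hvc : Polarizing v c)
    (hab : a ≠ b) (hac : a ≠ c) (had : a ≠ d) (hbc : b ≠ c) (hbd : b ≠ d) (hcd : c ≠ d) :
    HasCat24Minor P := by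
  rcases hua.rankedFirst_rankedLast_of_ne hud had with ⟨hua, hud⟩ | ⟨hud, hua⟩ <;>
    rcases hvb.rankedFirst_rankedLast_of_ne hvc hbc with ⟨hvb, hvc⟩ | ⟨hvc, hvb⟩
  · exact hasCat24Minor_of_rankedFirst_rankedLast hu hv hua hud hvb hvc hab hac had hbc hbd hcd
  · exact hasCat24Minor_of_rankedFirst_rankedLast hu hv hua hud hvc hvb hac hab had hbc.symm hcd
      hbd
  · exact hasCat24Minor_of_rankedFirst_rankedLast hu hv hud hua hvb hvc hbd.symm hcd.symm had.symm
      hbc hab.symm hac.symm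
  · exact hasCat24Minor_of_rankedFirst_rankedLast hu hv hud hua hvc hvb hcd.symm hbd.symm had.symm
      hbc.symm hac.symm hab.symm

theorem hasCat24Minor_of_not_polarizing [Finite C] [Nontrivial C] [Std.Asymm u]
    [IsStrictTotalOrder C v] (hu : u ∈ P) (hv : v ∈ P) (hua : Polarizing u a)
    (hud : Polarizing u d) (had : a ≠ d) (hva : ¬ Polarizing v a) (hvd : ¬ Polarizing v d) :
    HasCat24Minor P := by
  obtain ⟨b, hvb⟩ := exists_polarizing v
  obtain ⟨c, hcb, hvc⟩ := hvb.exists_polarizing_ne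
  have hne : ∀ {x y}, Polarizing v x → ¬ Polarizing v y → y ≠ x := fun hx hy h => hy (h ▸ hx)
  exact hasCat24Minor_of_polarizing hu hv hua hud hvb hvc (hne hvb hva) (hne hvc hva) had
    hcb.symm (hne hvb hvd).symm (hne hvc hvd).symm

theorem has2Minor_of_polarizing [Std.Asymm u] [Std.Asymm v] [Std.Asymm w]
    (hu : u ∈ P) (hv : v ∈ P) (hw : w ∈ P) (hab : a ≠ b) (hac : a ≠ c) (hbc : b ≠ c)
    (hub : Polarizing u b) (huc : Polarizing u c) (hva : Polarizing v a) (hvc : Polarizing v c)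
    (hwa : Polarizing w a) (hwb : Polarizing w b) : Has2Minor P :=
  ⟨u, hu, v, hv, w, hw, a, b, c, hab, hac, hbc,
    middleOf_of_polarizing hub huc hbc hab hac,
    middleOf_of_polarizing hva hvc hac hab.symm hbc,
    middleOf_of_polarizing hwa hwb hab hac.symm hbc.symm⟩

end Minor

end

/-- If no candidate of a finite candidate set `C` with `|C| ≥ 3` is polarizing for
every vote of the profile `P`, then `P` contains a 2-minor or one of the forbidden
2×4 minors (two votes `u, v` and four distinct candidates `a, b, c, d` with `u`
ranking `a` first and `d` last, and `v` ranking `b` first and `c` last, in the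
restrictions to `{a, b, c, d}`). -/
theorem no_common_polarizing_candidate_imp_minor
    {C : Type*} [Fintype C] (hC : 3 ≤ Fintype.card C)
    (P : List (C → C → Prop))
    (hvotes : ∀ v ∈ P, IsStrictTotalOrder C v)
    (h : ¬ ∃ a : C, ∀ v ∈ P, Polarizing v a) :
    Has2Minor P ∨ HasCat24Minor P := by
  have : Nontrivial C := Fintype.one_lt_card_iff_nontrivial.mp (by omega)
  push Not at h
  obtain ⟨u, hu, -⟩ := h (Classical.arbitrary C)
  have := hvotes u hu
  obtain ⟨x, hux⟩ := exists_polarizing u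
  obtain ⟨y, hyx, huy⟩ := hux.exists_polarizing_ne
  obtain ⟨v, hv, hvx⟩ := h x
  obtain ⟨w, hw, hwy⟩ := h y
  have := hvotes v hv
  have := hvotes w hw
  by_cases hvy : Polarizing v y
  swap
  · exact Or.inr (hasCat24Minor_of_not_polarizing hu hv hux huy hyx.symm hvx hvy)
  by_cases hwx : Polarizing w x
  swap
  · exact Or.inr (hasCat24Minor_of_not_polarizing hu hw hux huy hyx.symm hwx hwy)
  obtain ⟨z, hzy, hvz⟩ := hvy.exists_polarizing_ne
  obtain ⟨z', hz'x, hwz'⟩ := hwx.exists_polarizing_ne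
  have hzx : z ≠ x := fun h => hvx (h ▸ hvz)
  have hz'y : z' ≠ y := fun h => hwy (h ▸ hwz')
  by_cases hzz' : z = z'
  · subst hzz'
    exact Or.inl (has2Minor_of_polarizing hv hw hu hyx.symm hzx.symm hzy.symm
      hvy hvz hwx hwz' hux huy)
  · exact Or.inr (hasCat24Minor_of_polarizing hv hw hvy hvz hwx hwz' hyx hz'y.symm hzy.symm
      hz'x.symm hzx.symm (Ne.symm hzz'))
end

section
/- Let P be a preference profile over a finite candidate set C with |C| ≥ 3. Then P is caterpillar group-separable if and only if there exists a candidate a ∈ C that is polarizing for every vote of P and the profile obtained by restricting every vote of P to C∖{a} is caterpillar group-separable. -/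
section
variable {C : Type*}

theorem IsStrictTotalOrder.exists_forall_ne_rel [Finite C] [Nonempty C] (lt : C → C → Prop)
    [IsStrictTotalOrder C lt] : ∃ a, ∀ y ≠ a, lt a y := by
  obtain ⟨a, -, ha⟩ :=
    (Finite.wellFounded_of_trans_of_irrefl lt).has_min Set.univ Set.univ_nonempty
  refine ⟨a, fun y hy => ?_⟩
  rcases trichotomous_of lt a y with h | h | h
  · exact h
  · exact absurd h.symm hy
  · exact absurd h (ha y trivial)

theorem CatGS.exists_forall_polarizing [Finite C] [Nonempty C] {P : List (C → C → Prop)}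
    (h : CatGS P) : ∃ a, ∀ v ∈ P, Polarizing v a := by
  obtain ⟨lt, hlt, hsep⟩ := h
  obtain ⟨a, ha⟩ := hlt.exists_forall_ne_rel
  refine ⟨a, fun v hv => ?_⟩
  rcases hsep v hv a with h | h
  · exact Or.inl fun y hy => h y (ha y hy)
  · exact Or.inr fun y hy => h y (ha y hy)

theorem CatGS.restrict {P : List (C → C → Prop)} (h : CatGS P) (p : C → Prop) :
    CatGS (P.map fun v => fun x y : Subtype p => v x.val y.val) := by
  obtain ⟨lt, hlt, hsep⟩ := h
  refine ⟨Subrel lt p, (Subrel.relEmbedding lt p).isStrictTotalOrder, ?_⟩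
  simp only [List.mem_map]
  rintro _ ⟨v, hv, rfl⟩ x
  exact (hsep v hv x).imp (fun h y => h y) (fun h y => h y)

theorem CatGS.of_polarizing_of_restrict {P : List (C → C → Prop)} (a : C)
    (hpol : ∀ v ∈ P, Polarizing v a)
    (h : CatGS (P.map fun v => fun x y : {c : C // c ≠ a} => v x.val y.val)) : CatGS P := by
  classical
  obtain ⟨lt, hlt, hsep⟩ := h
  let := linearOrderOfSTO lt
  -- `a` becomes `⊥`, placed in front of the caterpillar of the other candidates
  let e : C ≃ WithBot {c : C // c ≠ a} := (Equiv.optionSubtypeNe a).symm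
  have he_self : e a = ⊥ := Equiv.optionSubtypeNe_symm_self a
  have he_of_ne {y : C} (hy : y ≠ a) : e y = ↑(⟨y, hy⟩ : {c : C // c ≠ a}) :=
    Equiv.optionSubtypeNe_symm_of_ne hy
  refine ⟨e ⁻¹'o (· < ·), (RelIso.preimage e _).toRelEmbedding.isStrictTotalOrder,
    fun v hv x => ?_⟩
  by_cases hx : x = a
  · subst hx
    refine (hpol v hv).imp (fun h y hy => h y ?_) (fun h y hy => h y ?_) <;>
    · rintro rfl
      exact lt_irrefl _ hy
  · have hlt_of : ∀ y, e x < e y → ∃ hy : y ≠ a, lt ⟨x, hx⟩ ⟨y, hy⟩ := by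
      intro y hxy
      by_cases hy : y = a
      · rw [hy, he_self] at hxy
        exact absurd hxy not_lt_bot
      · rw [he_of_ne hx, he_of_ne hy, WithBot.coe_lt_coe] at hxy
        exact ⟨hy, hxy⟩
    refine (hsep _ (List.mem_map_of_mem hv) ⟨x, hx⟩).imp (fun h y hxy => ?_) (fun h y hxy => ?_)
    all_goals
      obtain ⟨hy, hlt⟩ := hlt_of y hxy
      exact h ⟨y, hy⟩ hlt

end

theorem catGS_iff_polarizing_and_delete_general
    {C : Type*} [Fintype C] (hC : 3 ≤ Fintype.card C)
    (P : List (C → C → Prop)) :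
    CatGS P ↔
      ∃ a : C, (∀ v ∈ P, Polarizing v a) ∧
        CatGS (P.map fun v => fun x y : {c : C // c ≠ a} => v x.val y.val) := by
  have : Nonempty C := Fintype.card_pos_iff.mp (by omega)
  constructor
  · intro h
    obtain ⟨a, ha⟩ := h.exists_forall_polarizing
    exact ⟨a, ha, h.restrict _⟩
  · rintro ⟨a, hpol, h⟩
    exact h.of_polarizing_of_restrict a hpol

/-- A profile over a finite candidate set `C` with `|C| ≥ 3` is caterpillar
group-separable if and only if some candidate `a` is polarizing for every vote and
the profile obtained by restricting every vote to `C \ {a}` is caterpillar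
group-separable. -/
theorem catGS_iff_polarizing_and_delete
    {C : Type*} [Fintype C] (hC : 3 ≤ Fintype.card C)
    (P : List (C → C → Prop))
    (hvotes : ∀ v ∈ P, IsStrictTotalOrder C v) :
    CatGS P ↔
      ∃ a : C, (∀ v ∈ P, Polarizing v a) ∧
        CatGS (P.map fun v => fun x y : {c : C // c ≠ a} => v x.val y.val) :=
  catGS_iff_polarizing_and_delete_general hC P
end

section
/- Let G = (V, E) be a finite simple graph and let k ≥ 1 be an integer. Let G⁺ be the graph obtained from G by adding k pairwise disjoint new cliques H₁,…,H_k, each on k+2 new vertices, adding every edge between a vertex of V and a new vertex, and adding no edges between distinct cliques H_i and H_j. Then the vertex set of G⁺ can be partitioned into k cliques if and only if V can be partitioned into k cliques of G. -/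
/-- The graph `G⁺` obtained from `G` by adding `k` pairwise disjoint new cliques
`H₁, …, H_k`, each on `k + 2` new vertices (vertex `Sum.inr (i, a)` is the `a`-th
vertex of clique `H_i`), adding every edge between an old vertex and a new vertex,
and adding no edges between distinct new cliques. -/
def GPlus {V : Type*} (G : SimpleGraph V) (k : ℕ) :
    SimpleGraph (V ⊕ (Fin k × Fin (k + 2))) where
  Adj x y :=
    match x, y with
    | Sum.inl a, Sum.inl b => G.Adj a b
    | Sum.inl _, Sum.inr _ => True
    | Sum.inr _, Sum.inl _ => True
    | Sum.inr p, Sum.inr q => p.1 = q.1 ∧ p.2 ≠ q.2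
  symm := by
    constructor
    rintro (a | p) (b | q) h
    · exact G.adj_symm h
    · trivial
    · trivial
    · exact ⟨h.1.symm, h.2.symm⟩
  loopless := by
    constructor
    rintro (a | p) h
    · exact G.irrefl h
    · exact h.2 rfl

/-- The vertex set of `G` can be partitioned into `k` (possibly empty) sets, each of
which induces a complete subgraph. -/
def CliquePartition {V : Type*} (G : SimpleGraph V) (k : ℕ) : Prop :=
  ∃ f : V → Fin k, ∀ x y : V, f x = f y → x ≠ y → G.Adj x y

theorem CliquePartition.of_embedding {V W : Type*} {G : SimpleGraph V} {H : SimpleGraph W}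
    {k : ℕ} (e : G ↪g H) (hH : CliquePartition H k) : CliquePartition G k := by
  obtain ⟨f, hf⟩ := hH
  exact ⟨f ∘ e, fun x y hxy hne => e.map_adj_iff.mp (hf _ _ hxy (e.injective.ne hne))⟩

def GPlus.inlEmbedding {V : Type*} (G : SimpleGraph V) (k : ℕ) : G ↪g GPlus G k where
  toEmbedding := Function.Embedding.inl
  map_rel_iff' := Iff.rfl

/-- Part `i` of the new partition is part `i` of the old one together with the clique `H_i`. -/
theorem CliquePartition.gPlus {V : Type*} {G : SimpleGraph V} {k : ℕ}
    (hG : CliquePartition G k) : CliquePartition (GPlus G k) k := by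
  obtain ⟨f, hf⟩ := hG
  refine ⟨Sum.elim f Prod.fst, ?_⟩
  rintro (a | ⟨i, a⟩) (b | ⟨j, b⟩) hab hne
  · exact hf a b hab (by rintro rfl; exact hne rfl)
  · trivial
  · trivial
  · obtain rfl : i = j := hab
    exact ⟨rfl, fun hab' => hne (congrArg (Sum.inr ∘ Prod.mk i) hab')⟩

theorem gplus_cliquePartition_iff_general
    {V : Type*} (G : SimpleGraph V) (k : ℕ) :
    CliquePartition (GPlus G k) k ↔ CliquePartition G k :=
  ⟨CliquePartition.of_embedding (GPlus.inlEmbedding G k), CliquePartition.gPlus⟩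

/-- For a finite simple graph `G` and `k ≥ 1`, the graph `G⁺` can be partitioned
into `k` cliques if and only if `G` can be partitioned into `k` cliques. -/
theorem gplus_cliquePartition_iff
    {V : Type*} [Fintype V] (G : SimpleGraph V) (k : ℕ) (hk : 1 ≤ k) :
    CliquePartition (GPlus G k) k ↔ CliquePartition G k :=
  gplus_cliquePartition_iff_general G k
end

section
/- Let H = (V', E') be a finite simple graph with vertices enumerated u₁,…,u_n having at least one pair of distinct non-adjacent vertices, and let P(H) = (v₁,…,v_n) be the profile constructed from H. If S ⊆ V' induces a clique in H, then the subprofile (v_i : u_i ∈ S) of P(H) is value-restricted, i.e., it contains no j-minor for any j ∈ {1,2,3}. -/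
/-! The construction `P(H)`: the vertex set of the graph `H` is a finite linearly
ordered type `W` (the linear order is the enumeration `u₁, …, u_n` of the vertices).
For each non-adjacent pair `p = (u_i, u_j)` with `u_i < u_j` there is a triple of
candidates `a^{i,j}, b^{i,j}, c^{i,j}`, encoded as `(p, 0), (p, 1), (p, 2)`. -/

/-- The non-adjacent pairs `(u_i, u_j)` with `i < j` of the graph `H`. -/
abbrev NonEdge {W : Type*} [LinearOrder W] (H : SimpleGraph W) : Type _ :=
  {p : W × W // p.1 < p.2 ∧ ¬ H.Adj p.1 p.2}

/-- The candidate set of the profile `P(H)`: a triple of candidates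
`a^{i,j} = (p, 0)`, `b^{i,j} = (p, 1)`, `c^{i,j} = (p, 2)` for each non-edge `p`. -/
abbrev Cand {W : Type*} [LinearOrder W] (H : SimpleGraph W) : Type _ :=
  NonEdge H × Fin 3

/-- The position (0 = first, 1 = second, 2 = third) that voter `ℓ` assigns to the
candidate `(e, t)` within its triple: voter `u_i` ranks `a ≻ b ≻ c`, voter `u_j`
ranks `b ≻ c ≻ a`, and every other voter ranks `c ≻ a ≻ b`, where `e = (u_i, u_j)`. -/
def localRank {W : Type*} [LinearOrder W] {H : SimpleGraph W}
    (ℓ : W) (e : NonEdge H) (t : Fin 3) : ℕ :=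
  if ℓ = e.val.1 then t.val
  else if ℓ = e.val.2 then (t.val + 2) % 3
  else (t.val + 1) % 3

/-- The vote `v_ℓ` of the profile `P(H)`, as the strict linear order
`voteRel H ℓ x y` meaning "voter `ℓ` ranks candidate `x` above candidate `y`":
triples are ordered lexicographically by their non-edge, and within a triple
candidates are ordered according to `localRank`. -/
def voteRel {W : Type*} [LinearOrder W] (H : SimpleGraph W)
    (ℓ : W) (x y : Cand H) : Prop :=
  (x.1.val.1 < y.1.val.1 ∨ (x.1.val.1 = y.1.val.1 ∧ x.1.val.2 < y.1.val.2)) ∨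
  (x.1 = y.1 ∧ localRank ℓ x.1 x.2 < localRank ℓ y.1 y.2)

/-- The subprofile of the profile `(vote p)_{p}` given by the index set `S`
contains an `i`-minor: there are three distinct votes of the subprofile and three
distinct candidates such that each candidate is ranked in the `i`-th position (in
the restriction to the triple) by exactly one of the three votes. -/
def HasIMinorOn {ι C : Type*} (i : ℕ) (vote : ι → C → C → Prop) (S : Set ι) : Prop :=
  ∃ p ∈ S, ∃ q ∈ S, ∃ r ∈ S, p ≠ q ∧ p ≠ r ∧ q ≠ r ∧
    ∃ a b c : C, a ≠ b ∧ a ≠ c ∧ b ≠ c ∧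
      PosOf i (vote p) a b c ∧ PosOf i (vote q) b a c ∧ PosOf i (vote r) c a b

/-! In a `j`-minor on voters `p, q, r` and candidates `a, b, c`, the position of a candidate
in the restriction of a vote to `{a, b, c}` is determined by how the vote compares it with the
other two. Hence two of the three voters never agree on how the candidate of one of them
compares with the other two candidates. If some candidate lies in a different triple from the
other two, every vote compares it with them in the same (lexicographic) way. Otherwise all
three lie in a single triple `T^{i,j}`; as `u_i` and `u_j` are non-adjacent, the clique contains
at most one of them, so two of the three voters are neither and both rank the triple
`c ≻ a ≻ b`. -/

section PosOf

variable {C : Type*} {j : ℕ} {v w : C → C → Prop} {x y z : C}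

def AgreeOn (v w : C → C → Prop) (x y : C) : Prop :=
  (v x y ↔ w x y) ∧ (v y x ↔ w y x)

theorem posOf_comm : PosOf j v x y z ↔ PosOf j v x z y := by
  rcases j with _ | _ | _ | _ | j <;> simp only [PosOf] <;> tauto

theorem posOf_congr (hxy : AgreeOn v w x y) (hxz : AgreeOn v w x z) :
    PosOf j v x y z ↔ PosOf j w x y z := by
  rcases j with _ | _ | _ | _ | j <;> simp only [PosOf, hxy.1, hxy.2, hxz.1, hxz.2]

theorem not_posOf_of_posOf [IsStrictOrder C v] (h : PosOf j v x y z) : ¬ PosOf j v y x z := by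
  rcases j with _ | _ | _ | _ | j <;> simp only [PosOf] at h ⊢
  · exact fun h' => asymm_of v h.1 h'.1
  · rintro (⟨hxy, hyz⟩ | ⟨hzy, hyx⟩) <;> rcases h with ⟨hyx', hxz⟩ | ⟨hzx, hxy'⟩
    · exact asymm_of v hxy hyx'
    · exact asymm_of v (trans_of v hyz hzx) hxy
    · exact asymm_of v (trans_of v hxz hzy) hyx
    · exact asymm_of v hyx hxy'
  · exact fun h' => asymm_of v h.1 h'.1

theorem false_of_posOf_of_agreeOn [IsStrictOrder C w] (hv : PosOf j v x y z)
    (hw : PosOf j w y x z) (hxy : AgreeOn v w x y) (hxz : AgreeOn v w x z) : False :=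
  not_posOf_of_posOf ((posOf_congr hxy hxz).1 hv) hw

end PosOf

section Profile

variable {W : Type*} [LinearOrder W] {H : SimpleGraph W}

def voteKey (ℓ : W) (x : Cand H) : W ×ₗ W ×ₗ ℕ :=
  toLex (x.1.val.1, toLex (x.1.val.2, localRank ℓ x.1 x.2))

theorem voteRel_iff_voteKey_lt (ℓ : W) (x y : Cand H) :
    voteRel H ℓ x y ↔ voteKey ℓ x < voteKey ℓ y := by
  obtain ⟨⟨⟨x₁, x₂⟩, hx⟩, s⟩ := x
  obtain ⟨⟨⟨y₁, y₂⟩, hy⟩, t⟩ := y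
  simp only [voteRel, voteKey, Prod.Lex.toLex_lt_toLex, Subtype.mk.injEq, Prod.mk.injEq]
  constructor
  · rintro ((h | ⟨rfl, h⟩) | ⟨⟨rfl, rfl⟩, h⟩) <;> simp_all
  · rintro (h | ⟨rfl, h | ⟨rfl, h⟩⟩) <;> simp_all

instance isStrictOrder_voteRel (ℓ : W) : IsStrictOrder (Cand H) (voteRel H ℓ) where
  irrefl x h := lt_irrefl _ ((voteRel_iff_voteKey_lt ℓ x x).1 h)
  trans x y z hxy hyz := (voteRel_iff_voteKey_lt ℓ x z).2 <|
    ((voteRel_iff_voteKey_lt ℓ x y).1 hxy).trans ((voteRel_iff_voteKey_lt ℓ y z).1 hyz)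

theorem agreeOn_voteRel_of_ne (ℓ ℓ' : W) {x y : Cand H} (h : x.1 ≠ y.1) :
    AgreeOn (voteRel H ℓ) (voteRel H ℓ') x y :=
  ⟨by simp [voteRel, h], by simp [voteRel, h.symm]⟩

def NonEdge.IsEndpoint (e : NonEdge H) (ℓ : W) : Prop :=
  ℓ = e.val.1 ∨ ℓ = e.val.2

theorem agreeOn_voteRel_of_not_isEndpoint {e : NonEdge H} {ℓ ℓ' : W} (hℓ : ¬ e.IsEndpoint ℓ)
    (hℓ' : ¬ e.IsEndpoint ℓ') {x y : Cand H} (hx : x.1 = e) (hy : y.1 = e) :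
    AgreeOn (voteRel H ℓ) (voteRel H ℓ') x y := by
  have hrank : ∀ t, localRank ℓ e t = localRank ℓ' e t := by
    simp only [NonEdge.IsEndpoint, not_or] at hℓ hℓ'
    simp [localRank, hℓ.1, hℓ.2, hℓ'.1, hℓ'.2]
  simp [AgreeOn, voteRel, hx, hy, hrank]

theorem NonEdge.not_isEndpoint_or_not_isEndpoint_of_adj (e : NonEdge H) {p q : W}
    (h : H.Adj p q) : ¬ e.IsEndpoint p ∨ ¬ e.IsEndpoint q := by
  by_contra! hpq
  rcases hpq with ⟨rfl | rfl, rfl | rfl⟩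
  exacts [H.irrefl h, e.prop.2 h, e.prop.2 h.symm, H.irrefl h]

theorem NonEdge.two_not_isEndpoint_of_adj (e : NonEdge H) {p q r : W} (hpq : H.Adj p q)
    (hpr : H.Adj p r) (hqr : H.Adj q r) :
    (¬ e.IsEndpoint p ∧ ¬ e.IsEndpoint q) ∨ (¬ e.IsEndpoint p ∧ ¬ e.IsEndpoint r) ∨
      (¬ e.IsEndpoint q ∧ ¬ e.IsEndpoint r) := by
  have := e.not_isEndpoint_or_not_isEndpoint_of_adj hpq
  have := e.not_isEndpoint_or_not_isEndpoint_of_adj hpr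
  have := e.not_isEndpoint_or_not_isEndpoint_of_adj hqr
  tauto

end Profile

theorem clique_subprofile_value_restricted_general
    {W : Type*} [LinearOrder W] (H : SimpleGraph W)
    (S : Set W) (hclique : ∀ x ∈ S, ∀ y ∈ S, x ≠ y → H.Adj x y) :
    ∀ j : ℕ, j = 1 ∨ j = 2 ∨ j = 3 → ¬ HasIMinorOn j (voteRel H) S := by
  rintro j - ⟨p, hp, q, hq, r, hr, hpq, hpr, hqr, a, b, c, -, -, -, ha, hb, hc⟩
  by_cases hab : a.1 = b.1 <;> by_cases hac : a.1 = c.1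
  · rcases a.1.two_not_isEndpoint_of_adj (hclique p hp q hq hpq) (hclique p hp r hr hpr)
      (hclique q hq r hr hqr) with ⟨hp', hq'⟩ | ⟨hp', hr'⟩ | ⟨hq', hr'⟩
    · exact false_of_posOf_of_agreeOn ha hb
        (agreeOn_voteRel_of_not_isEndpoint hp' hq' rfl hab.symm)
        (agreeOn_voteRel_of_not_isEndpoint hp' hq' rfl hac.symm)
    · exact false_of_posOf_of_agreeOn hc (posOf_comm.1 ha)
        (agreeOn_voteRel_of_not_isEndpoint hr' hp' hac.symm rfl)
        (agreeOn_voteRel_of_not_isEndpoint hr' hp' hac.symm hab.symm)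
    · exact false_of_posOf_of_agreeOn (posOf_comm.1 hc) (posOf_comm.1 hb)
        (agreeOn_voteRel_of_not_isEndpoint hr' hq' hac.symm hab.symm)
        (agreeOn_voteRel_of_not_isEndpoint hr' hq' hac.symm rfl)
  · exact false_of_posOf_of_agreeOn hc (posOf_comm.1 ha)
      (agreeOn_voteRel_of_ne r p (Ne.symm hac)) (agreeOn_voteRel_of_ne r p (hab ▸ Ne.symm hac))
  · exact false_of_posOf_of_agreeOn hb ha
      (agreeOn_voteRel_of_ne q p (Ne.symm hab)) (agreeOn_voteRel_of_ne q p (hac ▸ Ne.symm hab))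
  · exact false_of_posOf_of_agreeOn ha hb
      (agreeOn_voteRel_of_ne p q hab) (agreeOn_voteRel_of_ne p q hac)

/-- If `S` induces a clique in `H`, then the subprofile `(v_i : u_i ∈ S)` of `P(H)`
is value-restricted: it contains no `j`-minor for any `j ∈ {1,2,3}`. -/
theorem clique_subprofile_value_restricted
    {W : Type*} [LinearOrder W] [Fintype W] (H : SimpleGraph W)
    (hne : ∃ x y : W, x ≠ y ∧ ¬ H.Adj x y)
    (S : Set W) (hclique : ∀ x ∈ S, ∀ y ∈ S, x ≠ y → H.Adj x y) :
    ∀ j : ℕ, j = 1 ∨ j = 2 ∨ j = 3 → ¬ HasIMinorOn j (voteRel H) S :=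
  clique_subprofile_value_restricted_general H S hclique
end

section
/- Let H = (V', E') be a finite simple graph with vertices enumerated u₁,…,u_n having at least one pair of distinct non-adjacent vertices, and let P(H) = (v₁,…,v_n) be the profile constructed from H. If u_r, u_s, u_t are three distinct vertices with {u_r, u_s} ∉ E', then the restriction of the three votes v_r, v_s, v_t to the candidate triple T^{r,s} is a j-minor for every j ∈ {1,2,3}. -/
/-! Within the triple `T^{r,s}` the three votes `v_r, v_s, v_t` rank the candidates
`a, b, c` by the three cyclic rotations of `(0, 1, 2)`. Hence for the `k`-th candidate
`x` of `v_r`, the candidates `y = x + 1` and `z = x + 2` (indices mod 3) occupy the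
same position `k` (counted from 0) in `v_s` and in `v_t`. -/

theorem posOf_of_rank {C : Type*} {v : C → C → Prop} (ρ : C → ℕ)
    (hρ : ∀ a b, ρ a < ρ b → v a b) {x y z : C}
    (hx : ρ x < 3) (hy : ρ y < 3) (hz : ρ z < 3)
    (hxy : ρ x ≠ ρ y) (hxz : ρ x ≠ ρ z) (hyz : ρ y ≠ ρ z) :
    PosOf (ρ x + 1) v x y z := by
  rcases (by omega : ρ x = 0 ∨ ρ x = 1 ∨ ρ x = 2) with h | h | h <;> rw [h] <;>
    simp only [PosOf, zero_add, Nat.reduceAdd]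
  · exact ⟨hρ _ _ (by omega), hρ _ _ (by omega)⟩
  · rcases (by omega : ρ y = 0 ∧ ρ z = 2 ∨ ρ y = 2 ∧ ρ z = 0) with ⟨hy0, hz2⟩ | ⟨hy2, hz0⟩
    · exact Or.inl ⟨hρ _ _ (by omega), hρ _ _ (by omega)⟩
    · exact Or.inr ⟨hρ _ _ (by omega), hρ _ _ (by omega)⟩
  · exact ⟨hρ _ _ (by omega), hρ _ _ (by omega)⟩

section localRank

variable {W : Type*} [LinearOrder W] {H : SimpleGraph W}

theorem localRank_fst (e : NonEdge H) (u : Fin 3) : localRank e.val.1 e u = u.val := by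
  simp [localRank]

theorem localRank_snd (e : NonEdge H) (u : Fin 3) :
    localRank e.val.2 e u = (u.val + 2) % 3 := by
  simp [localRank, e.prop.1.ne']

theorem localRank_of_ne {ℓ : W} {e : NonEdge H} (h₁ : ℓ ≠ e.val.1) (h₂ : ℓ ≠ e.val.2)
    (u : Fin 3) : localRank ℓ e u = (u.val + 1) % 3 := by
  simp [localRank, h₁, h₂]

theorem localRank_lt_three (ℓ : W) (e : NonEdge H) (u : Fin 3) : localRank ℓ e u < 3 := by
  unfold localRank
  split_ifs <;> omega

theorem localRank_injective (ℓ : W) (e : NonEdge H) : Function.Injective (localRank ℓ e) := by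
  intro u w h
  unfold localRank at h
  split_ifs at h <;> omega

theorem posOf_voteRel_of_localRank {j : ℕ} (ℓ : W) (e : NonEdge H) {x y z : Fin 3}
    (hxy : x ≠ y) (hxz : x ≠ z) (hyz : y ≠ z) (hj : localRank ℓ e x + 1 = j) :
    PosOf j (voteRel H ℓ) (e, x) (e, y) (e, z) := by
  subst hj
  exact posOf_of_rank (v := fun u w => voteRel H ℓ (e, u) (e, w)) (localRank ℓ e)
    (fun _ _ h => Or.inr ⟨rfl, h⟩) (localRank_lt_three ..) (localRank_lt_three ..)
    (localRank_lt_three ..) ((localRank_injective ℓ e).ne hxy)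
    ((localRank_injective ℓ e).ne hxz) ((localRank_injective ℓ e).ne hyz)

end localRank

theorem Fin.three_rotations_pairwise_ne (k : Fin 3) : k ≠ k + 1 ∧ k ≠ k + 2 ∧ k + 1 ≠ k + 2 := by
  revert k; decide

theorem Set.insert_three_rotations {α : Type*} (a : α) (k : Fin 3) :
    ({(a, k), (a, k + 1), (a, k + 2)} : Set (α × Fin 3)) = {(a, 0), (a, 1), (a, 2)} := by
  fin_cases k <;> ext <;> simp <;> tauto

theorem nonedge_triple_is_j_minor_general
    {W : Type*} [LinearOrder W] (H : SimpleGraph W)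
    (r s t : W) (hrs : r < s) (hAdj : ¬ H.Adj r s) (htr : t ≠ r) (hts : t ≠ s) :
    ∀ j : ℕ, j = 1 ∨ j = 2 ∨ j = 3 →
      ∃ x y z : Cand H,
        ({x, y, z} : Set (Cand H)) =
          {(⟨(r, s), hrs, hAdj⟩, (0 : Fin 3)), (⟨(r, s), hrs, hAdj⟩, (1 : Fin 3)),
            (⟨(r, s), hrs, hAdj⟩, (2 : Fin 3))} ∧
        PosOf j (voteRel H r) x y z ∧ PosOf j (voteRel H s) y x z ∧
        PosOf j (voteRel H t) z x y := by
  intro j hj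
  set e : NonEdge H := ⟨(r, s), hrs, hAdj⟩
  obtain ⟨k, rfl⟩ : ∃ k : Fin 3, j = k.val + 1 := ⟨⟨j - 1, by omega⟩, (Nat.sub_add_cancel (by omega)).symm⟩
  obtain ⟨h01, h02, h12⟩ := Fin.three_rotations_pairwise_ne k
  refine ⟨(e, k), (e, k + 1), (e, k + 2), Set.insert_three_rotations e k, ?_, ?_, ?_⟩
  · exact posOf_voteRel_of_localRank r e h01 h02 h12 (by rw [localRank_fst e])
  · refine posOf_voteRel_of_localRank s e h01.symm h12 h02 ?_
    rw [localRank_snd e, Fin.val_add]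
    omega
  · refine posOf_voteRel_of_localRank t e h02.symm h12.symm h01 ?_
    rw [localRank_of_ne htr hts, Fin.val_add]
    omega

/-- If `u_r, u_s, u_t` are three distinct vertices of `H` with `u_r < u_s`
non-adjacent, then the restriction of the votes `v_r, v_s, v_t` of `P(H)` to the
candidate triple `T^{r,s}` is a `j`-minor for every `j ∈ {1,2,3}`: the triple can be
listed as `x, y, z` so that `x` is in position `j` in `v_r`, `y` in position `j` in
`v_s`, and `z` in position `j` in `v_t`. -/
theorem nonedge_triple_is_j_minor
    {W : Type*} [LinearOrder W] [Fintype W] (H : SimpleGraph W)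
    (r s t : W) (hrs : r < s) (hAdj : ¬ H.Adj r s) (htr : t ≠ r) (hts : t ≠ s) :
    ∀ j : ℕ, j = 1 ∨ j = 2 ∨ j = 3 →
      ∃ x y z : Cand H,
        ({x, y, z} : Set (Cand H)) =
          {(⟨(r, s), hrs, hAdj⟩, (0 : Fin 3)), (⟨(r, s), hrs, hAdj⟩, (1 : Fin 3)),
            (⟨(r, s), hrs, hAdj⟩, (2 : Fin 3))} ∧
        PosOf j (voteRel H r) x y z ∧ PosOf j (voteRel H s) y x z ∧
        PosOf j (voteRel H t) z x y :=
  nonedge_triple_is_j_minor_general H r s t hrs hAdj htr hts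
end

section
/- Let H = (V', E') be a finite simple graph with vertices enumerated u₁,…,u_n having at least one pair of distinct non-adjacent vertices, and let P(H) be the profile constructed from H. Then there do not exist two votes u, v of P(H) and four distinct candidates a, b, c, d such that u ranks them a ≻ b ≻ c ≻ d and v ranks them b ≻ d ≻ a ≻ c (in the restrictions to {a,b,c,d}); that is, P(H) contains no 2×4 minor of the form a ≻_u b ≻_u c ≻_u d, b ≻_v d ≻_v a ≻_v c. -/
/-! Two votes of `P(H)` order the triples identically, so they can only disagree on two
candidates of the same triple. In the minor, the votes disagree on `(a, b)`, `(a, d)` and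
`(c, d)`, which forces all four candidates into one triple; but a triple has only three
candidates. -/

theorem fst_eq_of_voteRel_of_voteRel_swap {W : Type*} [LinearOrder W] {H : SimpleGraph W}
    {p q : W} {x y : Cand H} (hp : voteRel H p x y) (hq : voteRel H q y x) : x.1 = y.1 := by
  rcases hp with hxy | ⟨h, -⟩
  · rcases hq with hyx | ⟨h, -⟩
    · rw [← Prod.Lex.toLex_lt_toLex] at hxy hyx
      exact absurd hyx (lt_asymm hxy)
    · exact h.symm
  · exact h

theorem Fin.not_pairwise_ne_four (s t u v : Fin 3) :
    ¬ (s ≠ t ∧ s ≠ u ∧ s ≠ v ∧ t ≠ u ∧ t ≠ v ∧ u ≠ v) := by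
  decide +revert

theorem no_gs_24_minor_general
    {W : Type*} [LinearOrder W] (H : SimpleGraph W) :
    ¬ ∃ p q : W, p ≠ q ∧ ∃ a b c d : Cand H,
        a ≠ b ∧ a ≠ c ∧ a ≠ d ∧ b ≠ c ∧ b ≠ d ∧ c ≠ d ∧
        (voteRel H p a b ∧ voteRel H p a c ∧ voteRel H p a d ∧
         voteRel H p b c ∧ voteRel H p b d ∧ voteRel H p c d) ∧
        (voteRel H q b d ∧ voteRel H q b a ∧ voteRel H q b c ∧
         voteRel H q d a ∧ voteRel H q d c ∧ voteRel H q a c) := by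
  rintro ⟨p, q, -, ⟨e, s⟩, ⟨eb, t⟩, ⟨ec, u⟩, ⟨ed, v⟩, hab, hac, had, hbc, hbd, hcd,
    ⟨pab, -, pad, -, -, pcd⟩, ⟨-, qba, -, qda, qdc, -⟩⟩
  obtain rfl : e = eb := fst_eq_of_voteRel_of_voteRel_swap pab qba
  obtain rfl : e = ed := fst_eq_of_voteRel_of_voteRel_swap pad qda
  obtain rfl : ec = e := fst_eq_of_voteRel_of_voteRel_swap pcd qdc
  simp only [ne_eq, Prod.mk.injEq, true_and] at hab hac had hbc hbd hcd
  exact Fin.not_pairwise_ne_four s t u v ⟨hab, hac, had, hbc, hbd, hcd⟩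

/-- The profile `P(H)` contains no 2×4 minor of the form
`a ≻_u b ≻_u c ≻_u d`, `b ≻_v d ≻_v a ≻_v c`: there are no two votes
`u = v_p, v = v_q` (for distinct voters `p ≠ q`) and four distinct candidates
`a, b, c, d` such that, in the restrictions to `{a, b, c, d}`, `u` ranks them
`a ≻ b ≻ c ≻ d` and `v` ranks them `b ≻ d ≻ a ≻ c`. -/
theorem no_gs_24_minor
    {W : Type*} [LinearOrder W] [Fintype W] (H : SimpleGraph W)
    (hne : ∃ x y : W, x ≠ y ∧ ¬ H.Adj x y) :
    ¬ ∃ p q : W, p ≠ q ∧ ∃ a b c d : Cand H,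
        a ≠ b ∧ a ≠ c ∧ a ≠ d ∧ b ≠ c ∧ b ≠ d ∧ c ≠ d ∧
        (voteRel H p a b ∧ voteRel H p a c ∧ voteRel H p a d ∧
         voteRel H p b c ∧ voteRel H p b d ∧ voteRel H p c d) ∧
        (voteRel H q b d ∧ voteRel H q b a ∧ voteRel H q b c ∧
         voteRel H q d a ∧ voteRel H q d c ∧ voteRel H q a c) :=
  no_gs_24_minor_general H
end
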